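/- arXiv:2112.11144 — 2 statements merged into one kernel-verified Lean document; each statement's English description precedes it below -/
import Mathlib

section
/- Let c ≤ a ≤ b < d be positive integers. Then for every positive integer n, ex(n, S_{a,b}, S_{c,d}) ≤ r·n. -/
open SimpleGraph

/-- The number of subgraphs of `G` isomorphic to `H`. -/
noncomputable def copyCount {α β : Type*} (H : SimpleGraph α) (G : SimpleGraph β) : ℕ :=
  Set.ncard {G' : G.Subgraph | Nonempty (H ≃g G'.coe)}

/-- `G` contains a subgraph isomorphic to `F`. -/
def Contains {α β : Type*} (F : SimpleGraph α) (G : SimpleGraph β) : Prop :=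
  ∃ f : F →g G, Function.Injective f

/-- The generalized Turán number `ex(n, H, F)`: the maximum number of subgraphs
isomorphic to `H` in an `F`-free graph on `n` vertices. -/
noncomputable def exGen {α β : Type*} (n : ℕ) (H : SimpleGraph α) (F : SimpleGraph β) : ℕ :=
  sSup {N | ∃ G : SimpleGraph (Fin n), ¬ Contains F G ∧ N = copyCount H G}

/-- The double star `S_{a,b}`: central edge `0-1`, vertices `2,…,a+1` are leaves
attached to `0`, and vertices `a+2,…,a+b+1` are leaves attached to `1`. -/
def doubleStar (a b : ℕ) : SimpleGraph (Fin (a + b + 2)) :=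
  SimpleGraph.fromRel (fun x y =>
    (x.val = 0 ∧ y.val = 1) ∨ (x.val = 0 ∧ 2 ≤ y.val ∧ y.val < a + 2) ∨
      (x.val = 1 ∧ a + 2 ≤ y.val))

/-!
Count *rooted* copies of `S_{a,b}`: tuples `(u, v, X, Y)` where `uv` is an edge, `X` is a set of
`a` neighbours of `u` other than `v`, and `Y` is a set of `b` neighbours of `v` other than `u`,
disjoint from `X`. Every copy comes from a rooted copy, and from two of them (swap the centres)
when `a = b`.

Fix an edge `uv` and put `A = N(u) \ {v}`, `B = N(v) \ {u}`. As `G` is `S_{c,d}`-free,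
`|A| ≥ c` and `|B| ≥ d` force `|A ∪ B| < c + d`, and symmetrically. Hence, if `uv` carries a rooted
copy, either `|A ∪ B| ≤ c + d - 1`, so that `deg u ≤ c + d` and `uv` carries at most
`C(c+d-1, a) C(c+d-1-a, b)` rooted copies, or `|A|, |B| ≤ d - 1`, so that `deg u ≤ d` and `uv`
carries at most `C(d-1, a) C(d-1, b)`. Either way `deg u` times the number of rooted copies on `uv`
is at most `R = max ((c+d) C(c+d-1, a) C(c+d-1-a, b)) (d C(d-1, a) C(d-1, b))`; summing over the
`deg u` neighbours `v` of `u` bounds the rooted copies centred at `u` by `R`, hence all of them by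
`R n`.
-/

open Finset

variable {V W : Type*}

lemma Fin.range_append {m n : ℕ} (xs : Fin m → V) (ys : Fin n → V) :
    Set.range (Fin.append xs ys) = Set.range xs ∪ Set.range ys := by
  rw [← Set.Sum.elim_range, ← Fin.append_comp_sumElim]
  exact (finSumFinEquiv.surjective.range_comp _).symm

lemma Finset.range_coe_equivFin_symm (X : Finset V) :
    Set.range (fun k => (X.equivFin.symm k : V)) = X := by
  rw [Set.range_comp' Subtype.val X.equivFin.symm, X.equivFin.symm.range_eq_univ, Set.image_univ,
    Subtype.range_coe_subtype]
  rfl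

def doubleStarOn (u v : V) (A B : Set V) : SimpleGraph V :=
  fromRel fun x y => (x = u ∧ y = v) ∨ (x = u ∧ y ∈ A) ∨ (x = v ∧ y ∈ B)

lemma doubleStarOn_comm (u v : V) (A B : Set V) :
    doubleStarOn v u B A = doubleStarOn u v A B := by
  ext x y
  simp only [doubleStarOn, fromRel_adj]
  tauto

lemma map_doubleStarOn (f : V ↪ W) (u v : V) (A B : Set V) :
    (doubleStarOn u v A B).map f = doubleStarOn (f u) (f v) (f '' A) (f '' B) := by
  ext x y
  simp only [map_adj, doubleStarOn, fromRel_adj, Set.mem_image]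
  constructor
  · rintro ⟨x, y, ⟨hne, h⟩, rfl, rfl⟩
    refine ⟨f.injective.ne hne, ?_⟩
    aesop
  · rintro ⟨hne, h⟩
    aesop

lemma doubleStarOn_le {G : SimpleGraph V} {u v : V} {A B : Set V} (huv : G.Adj u v)
    (hA : ∀ x ∈ A, G.Adj u x) (hB : ∀ y ∈ B, G.Adj v y) : doubleStarOn u v A B ≤ G := by
  rintro x y ⟨-, h | h⟩ <;>
    obtain ⟨rfl, rfl⟩ | ⟨rfl, hy⟩ | ⟨rfl, hy⟩ := h
  exacts [huv, hA _ hy, hB _ hy, huv.symm, (hA _ hy).symm, (hB _ hy).symm]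

def leftLeaf (a b : ℕ) (k : Fin a) : Fin (a + b + 2) := (Fin.castAdd b k).succ.succ

def rightLeaf (a b : ℕ) (k : Fin b) : Fin (a + b + 2) := (Fin.natAdd a k).succ.succ

lemma mem_range_leftLeaf {a b : ℕ} {i : Fin (a + b + 2)} :
    i ∈ Set.range (leftLeaf a b) ↔ 2 ≤ i.val ∧ i.val < a + 2 := by
  constructor
  · rintro ⟨k, rfl⟩
    simp [leftLeaf]
  · intro h
    exact ⟨⟨i - 2, by omega⟩, Fin.ext (by simp [leftLeaf]; omega)⟩

lemma mem_range_rightLeaf {a b : ℕ} {i : Fin (a + b + 2)} :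
    i ∈ Set.range (rightLeaf a b) ↔ a + 2 ≤ i.val := by
  constructor
  · rintro ⟨k, rfl⟩
    simp [rightLeaf]
  · intro h
    exact ⟨⟨i - a - 2, by omega⟩, Fin.ext (by simp [rightLeaf]; omega)⟩

lemma leftLeaf_injective {a b : ℕ} : Function.Injective (leftLeaf a b) := by
  intro i j h
  simpa [leftLeaf, Fin.ext_iff] using h

lemma rightLeaf_injective {a b : ℕ} : Function.Injective (rightLeaf a b) := by
  intro i j h
  simpa [rightLeaf, Fin.ext_iff] using h

lemma doubleStar_eq_doubleStarOn (a b : ℕ) :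
    doubleStar a b = doubleStarOn 0 1 (Set.range (leftLeaf a b)) (Set.range (rightLeaf a b)) := by
  ext i j
  simp only [doubleStar, doubleStarOn, fromRel_adj, mem_range_leftLeaf, mem_range_rightLeaf,
    Fin.ext_iff, Fin.val_zero, Fin.val_one]

lemma univ_eq_centers_union_leaves (a b : ℕ) :
    (Set.univ : Set (Fin (a + b + 2))) =
      {0, 1} ∪ Set.range (leftLeaf a b) ∪ Set.range (rightLeaf a b) := by
  ext i
  simp only [Set.mem_univ, Set.mem_union, Set.mem_insert_iff, Set.mem_singleton_iff,
    mem_range_leftLeaf, mem_range_rightLeaf, Fin.ext_iff, Fin.val_zero, Fin.val_one, true_iff]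
  omega

lemma doubleStar_adj_zero_one (a b : ℕ) : (doubleStar a b).Adj 0 1 := by
  simp [doubleStar]

lemma doubleStar_adj_zero_leftLeaf {a b : ℕ} (k : Fin a) :
    (doubleStar a b).Adj 0 (leftLeaf a b k) := by
  simp only [doubleStar, fromRel_adj, ne_eq, Fin.ext_iff, leftLeaf, Fin.val_succ, Fin.val_castAdd,
    Fin.val_zero, true_and]
  omega

lemma doubleStar_adj_one_rightLeaf {a b : ℕ} (k : Fin b) :
    (doubleStar a b).Adj 1 (rightLeaf a b k) := by
  simp only [doubleStar, fromRel_adj, ne_eq, Fin.ext_iff, rightLeaf, Fin.val_succ, Fin.val_natAdd,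
    Fin.val_one, true_and]
  omega

lemma exists_disjoint_subsets_card_eq [DecidableEq V] {A B : Finset V} {c d : ℕ} (hc : c ≤ #A)
    (hd : d ≤ #B) (h : c + d ≤ #(A ∪ B)) :
    ∃ X ⊆ A, ∃ Y ⊆ B, #X = c ∧ #Y = d ∧ Disjoint X Y := by
  by_cases hBA : d ≤ #(B \ A)
  · obtain ⟨Y, hY, rfl⟩ := exists_subset_card_eq hBA
    obtain ⟨X, hX, rfl⟩ := exists_subset_card_eq hc
    exact ⟨X, hX, Y, hY.trans sdiff_subset, rfl, rfl, disjoint_sdiff.mono hX hY⟩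
  · obtain ⟨Y, hBAY, hYB, rfl⟩ := exists_subsuperset_card_eq sdiff_subset (le_of_not_ge hBA) hd
    have hcover : A ∪ B ⊆ A \ Y ∪ Y := by
      intro x hx
      have := @hBAY x
      simp only [mem_union, mem_sdiff] at *
      tauto
    have hcA : c ≤ #(A \ Y) := by
      have := (card_le_card hcover).trans (card_union_le _ _)
      omega
    obtain ⟨X, hX, rfl⟩ := exists_subset_card_eq hcA
    exact ⟨X, hX.trans sdiff_subset, Y, hYB, rfl, rfl, sdiff_disjoint.mono_left hX⟩

lemma card_filter_disjoint_powersetCard_product_le [DecidableEq V] {A B M : Finset V}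
    (hA : A ⊆ M) (hB : B ⊆ M) {a b : ℕ} :
    #{p ∈ A.powersetCard a ×ˢ B.powersetCard b | Disjoint p.1 p.2} ≤
      (#M).choose a * (#M - a).choose b := by
  have hsigma : #((M.powersetCard a).sigma fun X => (M \ X).powersetCard b) =
      (#M).choose a * (#M - a).choose b := by
    rw [card_sigma, sum_congr rfl fun X hX => by
      rw [card_powersetCard, card_sdiff_of_subset (mem_powersetCard.mp hX).1,
        (mem_powersetCard.mp hX).2], sum_const, card_powersetCard, smul_eq_mul]
  rw [← hsigma]
  refine card_le_card_of_injOn (fun p => ⟨p.1, p.2⟩) (fun p hp => ?_) (fun p _ q _ h => ?_)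
  · simp only [coe_filter, mem_product, mem_powersetCard, Set.mem_ofPred_eq] at hp
    simp only [coe_sigma, Set.mem_sigma_iff, mem_coe, mem_powersetCard, subset_sdiff]
    exact ⟨⟨hp.1.1.1.trans hA, hp.1.1.2⟩, ⟨hp.1.2.1.trans hB, hp.2.symm⟩, hp.1.2.2⟩
  · simp only [Sigma.mk.inj_iff, heq_eq_eq] at h
    exact Prod.ext h.1 h.2

lemma Finset.sum_le_of_card_mul_le {ι : Type*} {s : Finset ι} {f : ι → ℕ} {R : ℕ}
    (h : ∀ i ∈ s, #s * f i ≤ R) : ∑ i ∈ s, f i ≤ R := by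
  obtain rfl | hs := s.eq_empty_or_nonempty
  · simp
  refine Nat.le_of_mul_le_mul_left ?_ hs.card_pos
  calc #s * ∑ i ∈ s, f i = ∑ i ∈ s, #s * f i := mul_sum _ _ _
    _ ≤ ∑ _i ∈ s, R := sum_le_sum h
    _ = #s * R := by rw [sum_const, smul_eq_mul]

-- `rootedBound a b c d` is the paper's `r` when `a ≠ b` and `2 r` when `a = b`.
def rootedBound (a b c d : ℕ) : ℕ :=
  max ((c + d) * (c + d - 1).choose a * (c + d - 1 - a).choose b)
    (d * (d - 1).choose a * (d - 1).choose b)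

namespace SimpleGraph

variable (G : SimpleGraph V)

def starSubgraph (u v : V) (A B : Set V) : G.Subgraph where
  verts := {u, v} ∪ A ∪ B
  Adj x y := G.Adj x y ∧ (doubleStarOn u v A B).Adj x y
  adj_sub h := h.1
  edge_vert := by
    rintro x y ⟨-, -, h | h⟩ <;> obtain ⟨rfl, rfl⟩ | ⟨rfl, hy⟩ | ⟨rfl, hy⟩ := h <;> simp_all
  symm := ⟨fun _ _ h => ⟨h.1.symm, h.2.symm⟩⟩

lemma starSubgraph_comm (u v : V) (A B : Set V) :
    G.starSubgraph v u B A = G.starSubgraph u v A B := by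
  ext x
  · simp only [starSubgraph, Set.mem_union, Set.mem_insert_iff, Set.mem_singleton_iff]
    tauto
  · simp only [starSubgraph, doubleStarOn_comm]

variable {G}

lemma Copy.map_doubleStar {a b : ℕ} (f : Copy (doubleStar a b) G) :
    (doubleStar a b).map f.toEmbedding = doubleStarOn (f 0) (f 1)
      (Set.range (f ∘ leftLeaf a b)) (Set.range (f ∘ rightLeaf a b)) := by
  rw [congrArg (SimpleGraph.map f.toEmbedding) (doubleStar_eq_doubleStarOn a b), map_doubleStarOn,
    ← Set.range_comp, ← Set.range_comp]
  rfl

lemma Copy.toSubgraph_doubleStar {a b : ℕ} (f : Copy (doubleStar a b) G) :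
    f.toSubgraph = G.starSubgraph (f 0) (f 1)
      (Set.range (f ∘ leftLeaf a b)) (Set.range (f ∘ rightLeaf a b)) := by
  ext x y
  · simp only [Subgraph.map_verts, Subgraph.verts_top, univ_eq_centers_union_leaves,
      Set.image_union, Set.image_insert_eq, Set.image_singleton, ← Set.range_comp, starSubgraph]
    rfl
  · simp only [Subgraph.map_adj, Subgraph.top_adj, starSubgraph, ← f.map_doubleStar, map_adj,
      Relation.Map]
    constructor
    · rintro ⟨i, j, h, rfl, rfl⟩
      exact ⟨f.toHom.map_adj h, i, j, h, rfl, rfl⟩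
    · exact fun h => h.2

variable (G) [Fintype V] [DecidableEq V] [DecidableRel G.Adj]

def leafPairs (a b : ℕ) (u v : V) : Finset (Finset V × Finset V) :=
  {p ∈ ((G.neighborFinset u).erase v).powersetCard a ×ˢ
    ((G.neighborFinset v).erase u).powersetCard b | Disjoint p.1 p.2}

variable {G}

lemma mem_leafPairs {a b : ℕ} {u v : V} {p : Finset V × Finset V} :
    p ∈ G.leafPairs a b u v ↔ (p.1 ⊆ (G.neighborFinset u).erase v ∧ #p.1 = a) ∧
      (p.2 ⊆ (G.neighborFinset v).erase u ∧ #p.2 = b) ∧ Disjoint p.1 p.2 := by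
  simp only [leafPairs, mem_filter, mem_product, mem_powersetCard, and_assoc]

lemma doubleStar_isContained_of_mem_leafPairs {c d : ℕ} {u v : V} {X Y : Finset V}
    (huv : G.Adj u v) (h : (X, Y) ∈ G.leafPairs c d u v) : doubleStar c d ⊑ G := by
  obtain ⟨⟨hX, rfl⟩, ⟨hY, rfl⟩, hXY⟩ := mem_leafPairs.mp h
  have hX' : ∀ x ∈ X, G.Adj u x ∧ x ≠ v := fun x hx => by
    simpa [and_comm] using hX hx
  have hY' : ∀ y ∈ Y, G.Adj v y ∧ y ≠ u := fun y hy => by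
    simpa [and_comm] using hY hy
  let gX : Fin #X → V := fun k => X.equivFin.symm k
  let gY : Fin #Y → V := fun k => Y.equivFin.symm k
  let f : Fin (#X + #Y + 2) → V := Fin.cons u (Fin.cons v (Fin.append gX gY))
  have hf : Function.Injective f := by
    simp only [f, Fin.cons_injective_iff, Fin.range_cons, Fin.range_append,
      Fin.append_injective_iff, gX, gY, Finset.range_coe_equivFin_symm, Set.mem_insert_iff,
      Set.mem_union, mem_coe, not_or]
    refine ⟨⟨huv.ne, fun hu => (hX' u hu).1.ne rfl, fun hu => (hY' u hu).2 rfl⟩,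
      ⟨fun hv => (hX' v hv).2 rfl, fun hv => (hY' v hv).1.ne rfl⟩,
      Subtype.val_injective.comp X.equivFin.symm.injective,
      Subtype.val_injective.comp Y.equivFin.symm.injective,
      fun i j hij =>
        Finset.disjoint_left.mp hXY (X.equivFin.symm i).2 (hij ▸ (Y.equivFin.symm j).2)⟩
  have hfX : f ∘ leftLeaf #X #Y = gX := by
    funext k
    simp [f, leftLeaf, Fin.cons_succ, Fin.append_left]
  have hfY : f ∘ rightLeaf #X #Y = gY := by
    funext k
    simp [f, rightLeaf, Fin.cons_succ, Fin.append_right]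
  refine isContained_iff_exists_le_comap.mpr ⟨⟨f, hf⟩, ?_⟩
  rw [← map_le_iff_le_comap, doubleStar_eq_doubleStarOn, map_doubleStarOn]
  simp only [Function.Embedding.coeFn_mk, ← Set.range_comp, hfX, hfY, gX, gY,
    Finset.range_coe_equivFin_symm]
  exact doubleStarOn_le huv (fun x hx => (hX' x hx).1) (fun y hy => (hY' y hy).1)

lemma swap_mem_leafPairs {a b : ℕ} {u v : V} {p : Finset V × Finset V}
    (hp : p ∈ G.leafPairs a b u v) : p.swap ∈ G.leafPairs b a v u := by
  rw [mem_leafPairs] at hp ⊢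
  exact ⟨hp.2.1, hp.1, hp.2.2.symm⟩

lemma card_union_lt_of_not_isContained {c d : ℕ} (hfree : ¬ doubleStar c d ⊑ G) {u v : V}
    (huv : G.Adj u v) (hc : c ≤ #((G.neighborFinset u).erase v))
    (hd : d ≤ #((G.neighborFinset v).erase u)) :
    #((G.neighborFinset u).erase v ∪ (G.neighborFinset v).erase u) < c + d := by
  by_contra! h
  obtain ⟨X, hX, Y, hY, hXc, hYd, hXY⟩ := exists_disjoint_subsets_card_eq hc hd h
  exact hfree (doubleStar_isContained_of_mem_leafPairs huv
    (mem_leafPairs.mpr ⟨⟨hX, hXc⟩, ⟨hY, hYd⟩, hXY⟩))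

variable (G) in
lemma card_leafPairs_le_choose_mul_choose (a b : ℕ) (u v : V) :
    #(G.leafPairs a b u v) ≤
      (#((G.neighborFinset u).erase v)).choose a * (#((G.neighborFinset v).erase u)).choose b := by
  rw [← card_powersetCard, ← card_powersetCard, ← card_product]
  exact card_filter_le _ _

variable (G) in
lemma card_leafPairs_le_choose_union (a b : ℕ) (u v : V) :
    #(G.leafPairs a b u v) ≤
      (#((G.neighborFinset u).erase v ∪ (G.neighborFinset v).erase u)).choose a *
        (#((G.neighborFinset u).erase v ∪ (G.neighborFinset v).erase u) - a).choose b :=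
  card_filter_disjoint_powersetCard_product_le subset_union_left subset_union_right

lemma degree_mul_card_leafPairs_le {a b c d : ℕ} (hfree : ¬ doubleStar c d ⊑ G) (hca : c ≤ a)
    (hcb : c ≤ b) {u v : V} (huv : G.Adj u v) :
    G.degree u * #(G.leafPairs a b u v) ≤ rootedBound a b c d := by
  obtain hempty | ⟨p, hp⟩ := (G.leafPairs a b u v).eq_empty_or_nonempty
  · simp [hempty]
  have hunion := card_leafPairs_le_choose_union G a b u v
  have hprod := card_leafPairs_le_choose_mul_choose G a b u v
  set A := (G.neighborFinset u).erase v
  set B := (G.neighborFinset v).erase u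
  obtain ⟨⟨hpA, hpa⟩, ⟨hpB, hpb⟩, -⟩ := mem_leafPairs.mp hp
  have ha : a ≤ #A := hpa ▸ card_le_card hpA
  have hb : b ≤ #B := hpb ▸ card_le_card hpB
  have hdeg : G.degree u = #A + 1 := by
    rw [← card_neighborFinset_eq_degree, card_erase_add_one (mem_neighborFinset _ _ _ |>.mpr huv)]
  by_cases hm : #(A ∪ B) < c + d
  · have hA : #A ≤ #(A ∪ B) := card_le_card subset_union_left
    calc G.degree u * #(G.leafPairs a b u v)
        ≤ (c + d) * ((c + d - 1).choose a * (c + d - 1 - a).choose b) :=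
          Nat.mul_le_mul (by omega) <| hunion.trans <|
            Nat.mul_le_mul (Nat.choose_le_choose _ (by omega)) (Nat.choose_le_choose _ (by omega))
      _ ≤ rootedBound a b c d := by rw [rootedBound, ← mul_assoc]; exact le_max_left _ _
  · have hB : #B < d := by
      by_contra! hB
      exact hm (card_union_lt_of_not_isContained hfree huv (hca.trans ha) hB)
    have hA : #A < d := by
      by_contra! hA
      have := card_union_lt_of_not_isContained hfree huv.symm (hcb.trans hb) hA
      rw [union_comm] at this
      exact hm this
    calc G.degree u * #(G.leafPairs a b u v)
        ≤ d * ((d - 1).choose a * (d - 1).choose b) :=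
          Nat.mul_le_mul (by omega) <| hprod.trans <|
            Nat.mul_le_mul (Nat.choose_le_choose _ (by omega)) (Nat.choose_le_choose _ (by omega))
      _ ≤ rootedBound a b c d := by rw [rootedBound, ← mul_assoc]; exact le_max_right _ _

variable (G) in
def rootedDoubleStars (a b : ℕ) : Finset (Σ _ : V, Σ _ : V, Finset V × Finset V) :=
  univ.sigma fun u => (G.neighborFinset u).sigma fun v => G.leafPairs a b u v

lemma mem_rootedDoubleStars {a b : ℕ} {t : Σ _ : V, Σ _ : V, Finset V × Finset V} :
    t ∈ G.rootedDoubleStars a b ↔ G.Adj t.1 t.2.1 ∧ t.2.2 ∈ G.leafPairs a b t.1 t.2.1 := by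
  simp [rootedDoubleStars]

lemma card_rootedDoubleStars_le {a b c d : ℕ} (hfree : ¬ doubleStar c d ⊑ G) (hca : c ≤ a)
    (hcb : c ≤ b) : #(G.rootedDoubleStars a b) ≤ rootedBound a b c d * Fintype.card V := by
  rw [rootedDoubleStars, card_sigma]
  calc ∑ u, #((G.neighborFinset u).sigma fun v => G.leafPairs a b u v)
      ≤ ∑ _u : V, rootedBound a b c d := sum_le_sum fun u _ => by
        rw [card_sigma]
        refine Finset.sum_le_of_card_mul_le fun v hv => ?_
        rw [card_neighborFinset_eq_degree]
        exact degree_mul_card_leafPairs_le hfree hca hcb ((mem_neighborFinset _ _ _).mp hv)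
    _ = rootedBound a b c d * Fintype.card V := by rw [sum_const, card_univ, smul_eq_mul, mul_comm]

lemma Copy.exists_mem_rootedDoubleStars {a b : ℕ} (f : Copy (doubleStar a b) G) :
    ∃ t ∈ G.rootedDoubleStars a b, G.starSubgraph t.1 t.2.1 t.2.2.1 t.2.2.2 = f.toSubgraph := by
  refine ⟨⟨f 0, f 1, univ.image (f ∘ leftLeaf a b), univ.image (f ∘ rightLeaf a b)⟩, ?_, ?_⟩
  · have hne {i j : Fin (a + b + 2)} (h : i.val ≠ j.val) : f i ≠ f j :=
      f.injective.ne (Fin.ne_of_val_ne h)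
    rw [mem_rootedDoubleStars, mem_leafPairs]
    refine ⟨f.toHom.map_adj (doubleStar_adj_zero_one a b), ⟨?_, ?_⟩, ⟨?_, ?_⟩, ?_⟩
    · simp only [subset_iff, mem_image, mem_univ, true_and, mem_erase, mem_neighborFinset]
      rintro _ ⟨k, rfl⟩
      exact ⟨hne (by simp [leftLeaf]), f.toHom.map_adj (doubleStar_adj_zero_leftLeaf k)⟩
    · exact (card_image_of_injective _ (f.injective.comp leftLeaf_injective)).trans (by simp)
    · simp only [subset_iff, mem_image, mem_univ, true_and, mem_erase, mem_neighborFinset]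
      rintro _ ⟨k, rfl⟩
      exact ⟨hne (by simp [rightLeaf]), f.toHom.map_adj (doubleStar_adj_one_rightLeaf k)⟩
    · exact (card_image_of_injective _ (f.injective.comp rightLeaf_injective)).trans (by simp)
    · simp only [Finset.disjoint_left, mem_image, mem_univ, true_and]
      rintro _ ⟨i, rfl⟩ ⟨j, hj⟩
      exact hne (by simp [leftLeaf, rightLeaf]; omega) hj.symm
  · rw [f.toSubgraph_doubleStar]
    simp only [coe_image, coe_univ, Set.image_univ]

lemma copyCount_doubleStar_le_card_rootedDoubleStars (a b : ℕ) :
    (if a = b then 2 else 1) * _root_.copyCount (doubleStar a b) G ≤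
      #(G.rootedDoubleStars a b) := by
  classical
  let T := G.rootedDoubleStars a b
  let decode : (Σ _ : V, Σ _ : V, Finset V × Finset V) → G.Subgraph :=
    fun t => G.starSubgraph t.1 t.2.1 t.2.2.1 t.2.2.2
  have hcopies : _root_.copyCount (doubleStar a b) G ≤ #(T.image decode) := by
    rw [_root_.copyCount, ← Copy.range_toSubgraph, ← Set.ncard_coe_finset]
    refine Set.ncard_le_ncard ?_ (finite_toSet _)
    rintro _ ⟨f, rfl⟩
    obtain ⟨t, ht, hf⟩ := f.exists_mem_rootedDoubleStars
    exact mem_image.mpr ⟨t, ht, hf⟩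
  refine le_trans (Nat.mul_le_mul_left _ hcopies) ?_
  split_ifs with hab
  · subst hab
    refine mul_card_image_le_card T 2 fun S hS => ?_
    obtain ⟨t, ht, rfl⟩ := mem_image.mp hS
    let t' : Σ _ : V, Σ _ : V, Finset V × Finset V := ⟨t.2.1, t.1, t.2.2.swap⟩
    have ht' : t' ∈ T := mem_rootedDoubleStars.mpr
      ⟨(mem_rootedDoubleStars.mp ht).1.symm, swap_mem_leafPairs (mem_rootedDoubleStars.mp ht).2⟩
    have hne : t ≠ t' := fun h => (mem_rootedDoubleStars.mp ht).1.ne (congrArg Sigma.fst h)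
    calc 2 = #{t, t'} := (card_pair hne).symm
      _ ≤ #{s ∈ T | decode s = decode t} := card_le_card <| insert_subset_iff.mpr
        ⟨mem_filter.mpr ⟨ht, rfl⟩,
          singleton_subset_iff.mpr (mem_filter.mpr ⟨ht', G.starSubgraph_comm _ _ _ _⟩)⟩
  · simpa using card_image_le

theorem copyCount_doubleStar_mul_le {a b c d : ℕ} (hfree : ¬ doubleStar c d ⊑ G) (hca : c ≤ a)
    (hcb : c ≤ b) :
    (if a = b then 2 else 1) * _root_.copyCount (doubleStar a b) G ≤
      rootedBound a b c d * Fintype.card V :=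
  (copyCount_doubleStar_le_card_rootedDoubleStars a b).trans
    (card_rootedDoubleStars_le hfree hca hcb)

end SimpleGraph

lemma contains_iff_isContained {F : SimpleGraph W} {G : SimpleGraph V} : Contains F G ↔ F ⊑ G :=
  ⟨fun ⟨f, hf⟩ => ⟨⟨f, hf⟩⟩, fun ⟨f⟩ => ⟨f.toHom, f.injective⟩⟩

theorem exGen_doubleStar_doubleStar_upper_general (a b c d : ℕ)
    (hca : c ≤ a) (hab : a ≤ b) (r : ℝ)
    (hr : r = if a = b
      then max ((((c : ℝ) + d) / 2) * ((c + d - 1).choose a) * ((c + d - 1 - a).choose b))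
               (((d : ℝ) / 2) * ((d - 1).choose a) * ((d - 1).choose b))
      else max (((c : ℝ) + d) * ((c + d - 1).choose a) * ((c + d - 1 - a).choose b))
               ((d : ℝ) * ((d - 1).choose a) * ((d - 1).choose b))) :
    ∀ n : ℕ, 0 < n →
      (exGen n (doubleStar a b) (doubleStar c d) : ℝ) ≤ r * n := by
  intro n _
  set k : ℕ := if a = b then 2 else 1 with hk
  have hk0 : 0 < k := by rw [hk]; split_ifs <;> norm_num
  have hr' : r = rootedBound a b c d / k := by
    rw [hr, hk, rootedBound]
    split_ifs
    · push_cast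
      rw [← max_div_div_right zero_le_two]
      congr 1 <;> ring
    · push_cast
      rw [div_one]
  have hex : exGen n (doubleStar a b) (doubleStar c d) ≤ rootedBound a b c d * n / k := by
    refine csSup_le' ?_
    rintro _ ⟨G, hG, rfl⟩
    rw [Nat.le_div_iff_mul_le hk0, mul_comm]
    classical
    simpa only [Fintype.card_fin] using SimpleGraph.copyCount_doubleStar_mul_le
      (contains_iff_isContained.not.mp hG) hca (hca.trans hab)
  calc (exGen n (doubleStar a b) (doubleStar c d) : ℝ)
      ≤ ((rootedBound a b c d * n / k : ℕ) : ℝ) := Nat.cast_le.mpr hex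
    _ ≤ (rootedBound a b c d * n : ℕ) / k := Nat.cast_div_le
    _ = r * n := by rw [hr']; push_cast; ring

/-- for `c ≤ a ≤ b < d`, `ex(n, S_{a,b}, S_{c,d}) ≤ r·n`. -/
theorem exGen_doubleStar_doubleStar_upper (a b c d : ℕ) (hc : 0 < c)
    (hca : c ≤ a) (hab : a ≤ b) (hbd : b < d) (r : ℝ)
    (hr : r = if a = b
      then max ((((c : ℝ) + d) / 2) * ((c + d - 1).choose a) * ((c + d - 1 - a).choose b))
               (((d : ℝ) / 2) * ((d - 1).choose a) * ((d - 1).choose b))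
      else max (((c : ℝ) + d) * ((c + d - 1).choose a) * ((c + d - 1 - a).choose b))
               ((d : ℝ) * ((d - 1).choose a) * ((d - 1).choose b))) :
    ∀ n : ℕ, 0 < n →
      (exGen n (doubleStar a b) (doubleStar c d) : ℝ) ≤ r * n :=
  exGen_doubleStar_doubleStar_upper_general a b c d hca hab r hr
end

section
/- For every ε > 0 there exist δ > 0 and n₀ such that the following holds for all n ≥ n₀: if G is an F₂-free graph on n vertices with maximum degree Δ > n/2 and with at least Δ(n−Δ) − δn² edges, then G can be made bipartite by deleting at most εn² edges. -/
open SimpleGraph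

/-- The 2-fan `F₂`: two triangles `{0,1,2}` and `{0,3,4}` sharing the vertex `0`. -/
def twoFan : SimpleGraph (Fin 5) :=
  SimpleGraph.fromRel (fun x y =>
    x.val = 0 ∨ (x.val = 1 ∧ y.val = 2) ∨ (x.val = 3 ∧ y.val = 4))

/-!
Let `v` be a vertex of maximum degree `Δ` and `A` its neighbourhood. Two disjoint edges inside `A`
would form an `F₂` with `v`, so all edges inside `A` meet a single edge and there are at most `2n`
of them. Every vertex outside `A` has degree at most `Δ`, so
`2 e(G) = ∑_A deg + ∑_{Aᶜ} deg ≤ (e(A, Aᶜ) + 2 e(A)) + (n - Δ) Δ`. Together with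
`e(G) ≥ Δ (n - Δ) - δ n²` this shows that the edges not crossing the cut `(A, Aᶜ)` number at most
`4n + δ n²`, which is below `ε n²` for `δ = ε / 2` and `n ≥ 8 / ε`.
-/

open Finset

namespace SimpleGraph

variable {V : Type*} {G : SimpleGraph V}

theorem contains_twoFan_of_adj {v a b c d : V} (hab : G.Adj a b) (hcd : G.Adj c d)
    (hva : G.Adj v a) (hvb : G.Adj v b) (hvc : G.Adj v c) (hvd : G.Adj v d)
    (hac : a ≠ c) (had : a ≠ d) (hbc : b ≠ c) (hbd : b ≠ d) : Contains twoFan G := by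
  have := hva.ne; have := hvb.ne; have := hvc.ne; have := hvd.ne; have := hab.ne; have := hcd.ne
  refine ⟨⟨![v, a, b, c, d], fun {x y} h => ?_⟩, fun x y hxy => ?_⟩
  · fin_cases x <;> fin_cases y <;> simp_all [twoFan, G.adj_comm]
  · fin_cases x <;> fin_cases y <;> simp_all [eq_comm]

theorem ncard_neighborSet_eq_degree [Fintype V] [DecidableRel G.Adj] (v : V) :
    (G.neighborSet v).ncard = G.degree v := by
  rw [← Nat.card_coe_set_eq, Nat.card_eq_fintype_card, card_neighborSet_eq_degree]

theorem ncard_edgeSet_eq_card_edgeFinset [Fintype G.edgeSet] :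
    G.edgeSet.ncard = #G.edgeFinset := by
  rw [← coe_edgeFinset, Set.ncard_coe_finset]

variable [Fintype V] [DecidableEq V]

theorem card_edgeFinset_le_degree_add_degree {H : SimpleGraph V} [DecidableRel H.Adj] {x y : V}
    (h : ∀ e ∈ H.edgeSet, x ∈ e ∨ y ∈ e) : #H.edgeFinset ≤ H.degree x + H.degree y :=
  calc #H.edgeFinset ≤ #(H.incidenceFinset x ∪ H.incidenceFinset y) :=
        card_le_card fun e he => by
          have he := mem_edgeFinset.mp he
          simpa [incidenceSet, he] using h e he
    _ ≤ H.degree x + H.degree y := by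
        rw [← card_incidenceFinset_eq_degree, ← card_incidenceFinset_eq_degree]
        exact card_union_le _ _

theorem card_edgeFinset_le_two_mul_card {H : SimpleGraph V} [DecidableRel H.Adj]
    (h : ∀ ⦃a b c d⦄, H.Adj a b → H.Adj c d → a = c ∨ a = d ∨ b = c ∨ b = d) :
    #H.edgeFinset ≤ 2 * Fintype.card V := by
  obtain hempty | ⟨e, he⟩ := H.edgeFinset.eq_empty_or_nonempty
  · simp [hempty]
  induction e using Sym2.ind with | _ x y => ?_
  have hxy : H.Adj x y := by simpa using he
  refine (card_edgeFinset_le_degree_add_degree (x := x) (y := y) fun e he' => ?_).trans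
    (by linarith [H.degree_lt_card_verts x, H.degree_lt_card_verts y])
  induction e using Sym2.ind with | _ a b => ?_
  rcases h hxy (by simpa using he') with h | h | h | h <;> simp [h]

variable [DecidableRel G.Adj]

theorem card_edgeFinset_between_neighborFinset_le (hG : ¬ Contains twoFan G) (v : V) :
    #(G.between (G.neighborFinset v) (G.neighborFinset v)).edgeFinset ≤ 2 * Fintype.card V := by
  refine card_edgeFinset_le_two_mul_card fun a b c d hab hcd => ?_
  simp only [between_adj, coe_neighborFinset, mem_neighborSet, or_self] at hab hcd
  by_contra! hne
  exact hG (contains_twoFan_of_adj hab.1 hcd.1 hab.2.1 hab.2.2 hcd.2.1 hcd.2.2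
    hne.1 hne.2.1 hne.2.2.1 hne.2.2.2)

theorem neighborFinset_between_compl {s : Finset V} {a : V} (ha : a ∈ s) :
    (G.between s sᶜ).neighborFinset a = {w ∈ G.neighborFinset a | w ∉ s} := by
  ext w; simp [between_adj, ha]

theorem neighborFinset_between_self {s : Finset V} {a : V} (ha : a ∈ s) :
    (G.between s s).neighborFinset a = {w ∈ G.neighborFinset a | w ∈ s} := by
  ext w; simp [between_adj, ha]

theorem degree_eq_degree_between_compl_add_degree_between_self {s : Finset V} {a : V}
    (ha : a ∈ s) : G.degree a = (G.between s sᶜ).degree a + (G.between s s).degree a := by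
  rw [← card_neighborFinset_eq_degree, ← card_neighborFinset_eq_degree,
    ← card_neighborFinset_eq_degree, neighborFinset_between_compl ha,
    neighborFinset_between_self ha, add_comm]
  exact (card_filter_add_card_filter_not _).symm

theorem sum_degree_between_self (s : Finset V) :
    ∑ a ∈ s, (G.between s s).degree a = 2 * #(G.between s s).edgeFinset := by
  rw [← sum_degrees_eq_twice_card_edges]
  refine sum_subset (subset_univ s) fun w _ hw => ?_
  rw [← card_neighborFinset_eq_degree, card_eq_zero]
  ext u; simp [between_adj, hw]

theorem sum_degree_eq_card_edgeFinset_between_add (s : Finset V) :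
    ∑ a ∈ s, G.degree a = #(G.between s sᶜ).edgeFinset + 2 * #(G.between s s).edgeFinset := by
  have hcut : (G.between s sᶜ).IsBipartiteWith s ↑(sᶜ) := by
    simpa using between_isBipartiteWith disjoint_compl_right
  rw [sum_congr rfl fun a ha => degree_eq_degree_between_compl_add_degree_between_self ha,
    sum_add_distrib, sum_degree_between_self, isBipartiteWith_sum_degrees_eq_card_edges hcut]

theorem two_mul_card_edgeFinset_le_of_not_contains_twoFan (hG : ¬ Contains twoFan G) {v : V}
    (hv : ∀ u, G.degree u ≤ G.degree v) :
    2 * #G.edgeFinset ≤ #(G.between (G.neighborFinset v) (G.neighborFinset v)ᶜ).edgeFinset +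
      4 * Fintype.card V + (Fintype.card V - G.degree v) * G.degree v := by
  have hinside := card_edgeFinset_between_neighborFinset_le hG v
  have houtside : ∑ b ∈ (G.neighborFinset v)ᶜ, G.degree b ≤
      (Fintype.card V - G.degree v) * G.degree v :=
    calc ∑ b ∈ (G.neighborFinset v)ᶜ, G.degree b ≤ #(G.neighborFinset v)ᶜ • G.degree v :=
          sum_le_card_nsmul _ _ _ fun b _ => hv b
      _ = (Fintype.card V - G.degree v) * G.degree v := by
          rw [smul_eq_mul, card_compl, card_neighborFinset_eq_degree]
  rw [← sum_degrees_eq_twice_card_edges, ← sum_add_sum_compl (G.neighborFinset v),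
    sum_degree_eq_card_edgeFinset_between_add]
  omega

end SimpleGraph

/-- stability. An `F₂`-free graph with maximum degree `Δ > n/2` and at
least `Δ(n-Δ) - δn²` edges can be made bipartite by deleting at most `εn²` edges. -/
theorem twoFan_free_stability (ε : ℝ) (hε : 0 < ε) :
    ∃ δ : ℝ, 0 < δ ∧ ∃ n₀ : ℕ, ∀ n ≥ n₀, ∀ G : SimpleGraph (Fin n), ∀ Δ : ℕ,
      ¬ Contains twoFan G →
      (∀ v, (G.neighborSet v).ncard ≤ Δ) →
      (∃ v, (G.neighborSet v).ncard = Δ) →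
      (n : ℝ) / 2 < (Δ : ℝ) →
      (Δ : ℝ) * ((n : ℝ) - (Δ : ℝ)) - δ * (n : ℝ) ^ 2 ≤ (G.edgeSet.ncard : ℝ) →
      ∃ S : Set (Sym2 (Fin n)), S ⊆ G.edgeSet ∧ (S.ncard : ℝ) ≤ ε * (n : ℝ) ^ 2 ∧
        (G.deleteEdges S).Colorable 2 := by
  classical
  refine ⟨ε / 2, by positivity, ⌈8 / ε⌉₊, fun n hn G Δ hG hle ⟨v, hv⟩ _ hedges => ?_⟩
  simp only [ncard_neighborSet_eq_degree] at hle hv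
  subst hv
  set C := G.between (G.neighborFinset v) (G.neighborFinset v)ᶜ
  have hCG : C.edgeFinset ⊆ G.edgeFinset := edgeFinset_mono between_le
  refine ⟨G.edgeSet \ C.edgeSet, Set.sdiff_subset, ?_, ?_⟩
  · have hεn : 8 ≤ ε * n := by
      have := (div_le_iff₀' hε).mp ((Nat.le_ceil _).trans (Nat.cast_le.mpr hn))
      linarith
    have key : 2 * (#G.edgeFinset : ℝ) ≤
        #C.edgeFinset + 4 * n + (n - G.degree v) * G.degree v := by
      have hΔn : G.degree v ≤ n := by simpa using (G.degree_lt_card_verts v).le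
      have := two_mul_card_edgeFinset_le_of_not_contains_twoFan hG hle
      rw [Fintype.card_fin] at this
      rw [← Nat.cast_sub hΔn]
      exact_mod_cast this
    rw [← edgeSet_sdiff, ncard_edgeSet_eq_card_edgeFinset, edgeFinset_sdiff,
      card_sdiff_of_subset hCG, Nat.cast_sub (card_le_card hCG)]
    rw [ncard_edgeSet_eq_card_edgeFinset] at hedges
    nlinarith
  · rw [deleteEdges_sdiff_eq_of_le between_le]
    exact between_isBipartite disjoint_compl_right
end
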